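/- arXiv:1112.5530 — 3 statements merged into one kernel-verified Lean document; each statement's English description precedes it below -/
import Mathlib

section
/- Let G be a transitive subgroup of Sym(n) and H the stabilizer of the symbol 1 in G, so that left transversals of H in G (with identity) are sets containing exactly one element mapping 1 to each symbol. Then for left transversals T, L of H in G, a map σ : T → L is an isomorphism of the induced left loop structures if and only if there exists α ∈ Sym(n) with α(1) = 1 such that α T α^{-1} = L, and in that case σ is the restriction of conjugation by α to T. -/
/-!
Since `s⁻¹ * g ∈ H` means `g x₀ = s x₀` for the base point `x₀`, a transversal is the
same as a set on which evaluation at `x₀` is a bijection onto the symbols. Given an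
isomorphism `σ`, let `tᵢ ∈ T` be the element sending `x₀` to `i` and put
`α i := σ tᵢ x₀`. For `t ∈ T` the product `t tᵢ` lies in the coset `t_{t i} H`; the
isomorphism carries this to `σ t (α i) = α (t i)`, i.e. `σ t = α t α⁻¹`. Conversely,
conjugation by a permutation fixing `x₀` maps the stabiliser into itself, hence
preserves the relation `z⁻¹ (x y) ∈ H` defining the loop operation.
-/

/-- A left transversal (with identity) of the subgroup `H` inside the subgroup `K`:
`S ⊆ K`, `1 ∈ S`, and `S` contains exactly one representative of each left coset
of `H` inside `K`. -/
def IsLeftTransversalIn {P : Type*} [Group P] (K H : Subgroup P) (S : Set P) : Prop :=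
  (1 : P) ∈ S ∧ S ⊆ (K : Set P) ∧ ∀ g ∈ K, ∃! s, s ∈ S ∧ s⁻¹ * g ∈ H

/-- `σ` is an isomorphism of the induced left loop structures on left transversals
`T`, `L` of `H`. -/
def IsLeftIso {P : Type*} [Group P] (H : Subgroup P) (T L : Set P) (σ : P → P) : Prop :=
  Set.BijOn σ T L ∧ ∀ x ∈ T, ∀ y ∈ T, ∀ z ∈ T,
    z⁻¹ * (x * y) ∈ H → (σ z)⁻¹ * (σ x * σ y) ∈ H

open Equiv MulAction Set

section

variable {X : Type*} {G : Subgroup (Perm X)} {x₀ : X} {T L : Set (Perm X)}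
  {σ : Perm X → Perm X}

theorem inv_mul_mem_inf_stabilizer_iff {s g : Perm X} (hs : s ∈ G) (hg : g ∈ G) :
    s⁻¹ * g ∈ G ⊓ stabilizer (Perm X) x₀ ↔ g x₀ = s x₀ := by
  rw [Subgroup.mem_inf, mem_stabilizer_iff, Perm.smul_def, Perm.mul_apply, Perm.inv_eq_iff_eq]
  exact and_iff_right (mul_mem (inv_mem hs) hg)

theorem IsLeftTransversalIn.bijOn_apply {S : Set (Perm X)}
    (htrans : ∀ i, ∃ g ∈ G, g x₀ = i)
    (hS : IsLeftTransversalIn G (G ⊓ stabilizer (Perm X) x₀) S) :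
    BijOn (fun s : Perm X => s x₀) S univ := by
  obtain ⟨-, hSG, huniq⟩ := hS
  refine ⟨mapsTo_univ _ _, fun s hs t ht hst => ?_, fun i _ => ?_⟩
  · obtain ⟨r, -, hr⟩ := huniq s (hSG hs)
    have hs' : s⁻¹ * s ∈ G ⊓ stabilizer (Perm X) x₀ := by simp
    have ht' := (inv_mul_mem_inf_stabilizer_iff (hSG ht) (hSG hs)).2 hst
    exact (hr s ⟨hs, hs'⟩).trans (hr t ⟨ht, ht'⟩).symm
  · obtain ⟨g, hg, rfl⟩ := htrans i
    obtain ⟨s, ⟨hs, hsg⟩, -⟩ := huniq g hg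
    exact ⟨s, hs, ((inv_mul_mem_inf_stabilizer_iff (hSG hs) hg).1 hsg).symm⟩

theorem IsLeftIso.apply_apply_eq (hTG : T ⊆ G) (hLG : L ⊆ G)
    (hσ : IsLeftIso (G ⊓ stabilizer (Perm X) x₀) T L σ) {t s r : Perm X}
    (ht : t ∈ T) (hs : s ∈ T) (hr : r ∈ T) (hrts : t (s x₀) = r x₀) :
    σ t (σ s x₀) = σ r x₀ := by
  have hσT : ∀ {x}, x ∈ T → σ x ∈ G := fun hx => hLG (hσ.1.mapsTo hx)
  have hcoset := (inv_mul_mem_inf_stabilizer_iff (hTG hr) (mul_mem (hTG ht) (hTG hs))).2 hrts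
  exact (inv_mul_mem_inf_stabilizer_iff (hσT hr) (mul_mem (hσT ht) (hσT hs))).1
    (hσ.2 t ht s hs r hr hcoset)

theorem IsLeftIso.exists_conj (htrans : ∀ i, ∃ g ∈ G, g x₀ = i)
    (hT : IsLeftTransversalIn G (G ⊓ stabilizer (Perm X) x₀) T)
    (hL : IsLeftTransversalIn G (G ⊓ stabilizer (Perm X) x₀) L)
    (hσ : IsLeftIso (G ⊓ stabilizer (Perm X) x₀) T L σ) :
    ∃ α : Perm X, α x₀ = x₀ ∧
      (fun g => α * g * α⁻¹) '' T = L ∧ ∀ x ∈ T, σ x = α * x * α⁻¹ := by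
  have hTbij := hT.bijOn_apply htrans
  set τ := Function.invFunOn (fun s : Perm X => s x₀) T
  have hτT : MapsTo τ univ T := hTbij.surjOn.mapsTo_invFunOn
  have hτ_apply : ∀ i, τ i x₀ = i := fun i => hTbij.surjOn.rightInvOn_invFunOn (mem_univ i)
  have hαbij : BijOn (fun i => σ (τ i) x₀) univ univ :=
    (hL.bijOn_apply htrans).comp <| hσ.1.comp <|
      hTbij.invOn_invFunOn.symm.bijOn hτT hTbij.mapsTo
  obtain ⟨α, hα⟩ : ∃ α : Perm X, ∀ i, α i = σ (τ i) x₀ :=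
    ⟨Equiv.ofBijective _ (bijOn_univ.1 hαbij), fun _ => rfl⟩
  have hσα : ∀ t ∈ T, ∀ i, σ t (α i) = α (t i) := fun t ht i => by
    rw [hα, hα]
    exact hσ.apply_apply_eq hT.2.1 hL.2.1 ht (hτT (mem_univ i)) (hτT (mem_univ _))
      (by rw [hτ_apply, hτ_apply])
  have hσconj : ∀ t ∈ T, σ t = α * t * α⁻¹ := fun t ht =>
    Perm.ext fun j => by simpa using hσα t ht (α⁻¹ j)
  refine ⟨α, ?_, ?_, hσconj⟩
  · have hσ1 := hσ.apply_apply_eq hT.2.1 hL.2.1 hT.1 hT.1 hT.1 rfl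
    have hτ1 : τ x₀ = 1 := hTbij.injOn (hτT (mem_univ _)) hT.1 (hτ_apply x₀)
    rw [hα, hτ1]
    exact (σ 1).injective hσ1
  · rw [image_congr fun t ht => (hσconj t ht).symm, hσ.1.image_eq]

theorem isLeftIso_of_eqOn_conj {α : Perm X} (hα : α x₀ = x₀)
    (hTL : (fun g => α * g * α⁻¹) '' T = L) (hLG : L ⊆ G)
    (hσ : ∀ x ∈ T, σ x = α * x * α⁻¹) :
    IsLeftIso (G ⊓ stabilizer (Perm X) x₀) T L σ := by
  have hσG : ∀ x ∈ T, σ x ∈ G := fun x hx =>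
    hLG (hTL ▸ hσ x hx ▸ mem_image_of_mem _ hx)
  refine ⟨?_, fun x hx y hy z hz hxyz => ?_⟩
  · rw [← hTL]
    exact (MulAut.conj α).injective.injOn.bijOn_image.congr fun x hx => (hσ x hx).symm
  · have hconj : (σ z)⁻¹ * (σ x * σ y) = α * (z⁻¹ * (x * y)) * α⁻¹ := by
      rw [hσ x hx, hσ y hy, hσ z hz]
      group
    refine Subgroup.mem_inf.2
      ⟨mul_mem (inv_mem (hσG z hz)) (mul_mem (hσG x hx) (hσG y hy)), ?_⟩
    have hxyz₀ : (z⁻¹ * (x * y)) x₀ = x₀ := hxyz.2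
    rw [hconj, mem_stabilizer_iff, Perm.smul_def, Perm.mul_apply, Perm.mul_apply,
      Perm.inv_eq_iff_eq.2 hα.symm, hxyz₀, hα]

end

theorem transversal_iso_iff_conjugation {n : ℕ} [NeZero n]
    (G : Subgroup (Equiv.Perm (Fin n)))
    (htrans : ∀ i : Fin n, ∃ g ∈ G, g 0 = i)
    (H : Subgroup (Equiv.Perm (Fin n)))
    (hH : H = G ⊓ MulAction.stabilizer (Equiv.Perm (Fin n)) (0 : Fin n))
    (T L : Set (Equiv.Perm (Fin n)))
    (hT : IsLeftTransversalIn G H T) (hL : IsLeftTransversalIn G H L)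
    (σ : Equiv.Perm (Fin n) → Equiv.Perm (Fin n)) :
    IsLeftIso H T L σ ↔
      ∃ α : Equiv.Perm (Fin n), α 0 = 0 ∧
        (fun g => α * g * α⁻¹) '' T = L ∧ ∀ x ∈ T, σ x = α * x * α⁻¹ := by
  subst hH
  refine ⟨fun hσ => hσ.exists_conj htrans hT hL, ?_⟩
  rintro ⟨α, hα, hTL, hσ⟩
  exact isLeftIso_of_eqOn_conj hα hTL hL.2.1 hσ
end

section
/- Let G be a transitive subgroup of Sym(n) with H = Stab_G(1), and suppose every left transversal (containing the identity) of H in G generates G. Let K = {α ∈ Sym(n) : α(1)=1 and there exist left transversals T, L of H in G with α T α^{-1} = L}. Then K = N_{Sym(n-1)}(G), the set of permutations fixing 1 that normalize G. -/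
/-! Conjugation by `α` carries `T` onto `L`, so it carries `closure T = G` onto `closure L = G`;
hence `α` normalizes `G`. Conversely, if `α` fixes `0` and normalizes `G`, it also normalizes
`H = G ⊓ Stab(0)`, so conjugation by `α` maps any transversal of `H` in `G` to another one. -/

theorem exists_isLeftTransversalIn {P : Type*} [Group P] (K H : Subgroup P) :
    ∃ S, IsLeftTransversalIn K H S := by
  obtain ⟨S, hS, hS1⟩ := (H.subgroupOf K).exists_isComplement_left 1
  rw [Subgroup.isComplement_iff_existsUnique_inv_mul_mem] at hS
  refine ⟨K.subtype '' S, ⟨1, hS1, rfl⟩, by rintro _ ⟨s, -, rfl⟩; exact s.2, fun g hg => ?_⟩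
  obtain ⟨⟨s, hsS⟩, hs, huniq⟩ := hS ⟨g, hg⟩
  refine ⟨s, ⟨⟨s, hsS, rfl⟩, hs⟩, ?_⟩
  rintro _ ⟨⟨t, htS, rfl⟩, ht⟩
  exact congrArg (fun x : S => (x : P)) (huniq ⟨t, htS⟩ ht)

namespace IsLeftTransversalIn

variable {P : Type*} [Group P] {K H : Subgroup P}

theorem map {Q : Type*} [Group Q] {S : Set P} (φ : P ≃* Q) (hS : IsLeftTransversalIn K H S) :
    IsLeftTransversalIn (K.map (φ : P →* Q)) (H.map (φ : P →* Q)) (φ '' S) := by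
  obtain ⟨h1, hSK, huniq⟩ := hS
  refine ⟨⟨1, h1, map_one φ⟩, Set.image_mono hSK, ?_⟩
  rintro _ ⟨g, hg, rfl⟩
  obtain ⟨s, ⟨hsS, hs⟩, hsu⟩ := huniq g hg
  refine ⟨φ s, ⟨⟨s, hsS, rfl⟩, ⟨_, hs, by simp⟩⟩, ?_⟩
  rintro _ ⟨⟨t, htS, rfl⟩, ht⟩
  replace ht : φ (t⁻¹ * g) ∈ H.map (φ : P →* Q) := by rwa [map_mul, map_inv]
  rw [hsu t ⟨htS, (Subgroup.mem_map_iff_mem φ.injective).mp ht⟩]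

theorem conj_image {S : Set P} {α : P} (hK : α ∈ Subgroup.normalizer (K : Set P))
    (hH : α ∈ Subgroup.normalizer (H : Set P)) (hS : IsLeftTransversalIn K H S) :
    IsLeftTransversalIn K H ((fun g => α * g * α⁻¹) '' S) := by
  rw [Subgroup.mem_normalizer_iff_map_conj_eq] at hK hH
  have hαS := hS.map (MulAut.conj α)
  rwa [hK, hH] at hαS

end IsLeftTransversalIn

namespace Subgroup

variable {P : Type*} [Group P] {G : Subgroup P} {α : P}

theorem mem_normalizer_of_closure_conj_image {T : Set P} (hT : closure T = G)
    (hαT : closure ((fun g => α * g * α⁻¹) '' T) = G) : α ∈ normalizer (G : Set P) := by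
  rw [mem_normalizer_iff_map_conj_eq, ← hT, MonoidHom.map_closure, MonoidHom.coe_coe]
  exact hαT.trans hT.symm

theorem mem_normalizer_inf_stabilizer {X : Type*} [MulAction P X] {x : X}
    (hαG : α ∈ normalizer (G : Set P)) (hαx : α • x = x) :
    α ∈ normalizer ((G ⊓ MulAction.stabilizer P x : Subgroup P) : Set P) := by
  have hstab := MulAction.stabilizer_smul_eq_stabilizer_map_conj α x
  rw [hαx, MulEquiv.toMonoidHom_eq_coe] at hstab
  rw [mem_normalizer_iff_map_conj_eq] at hαG ⊢
  rw [map_inf_eq _ _ _ (MulAut.conj α).injective, hαG, ← hstab]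

end Subgroup

theorem K_eq_normalizer_of_transversals_generate_general {n : ℕ} [NeZero n]
    (G : Subgroup (Equiv.Perm (Fin n)))
    (H : Subgroup (Equiv.Perm (Fin n)))
    (hH : H = G ⊓ MulAction.stabilizer (Equiv.Perm (Fin n)) (0 : Fin n))
    (hgen : ∀ T : Set (Equiv.Perm (Fin n)),
      IsLeftTransversalIn G H T → Subgroup.closure T = G) :
    {α : Equiv.Perm (Fin n) | α 0 = 0 ∧
        ∃ T L : Set (Equiv.Perm (Fin n)), IsLeftTransversalIn G H T ∧
          IsLeftTransversalIn G H L ∧ (fun g => α * g * α⁻¹) '' T = L} =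
      {α : Equiv.Perm (Fin n) | α 0 = 0 ∧ α ∈ Subgroup.normalizer (G : Set (Equiv.Perm (Fin n)))} := by
  ext α
  refine and_congr_right fun hα0 => ⟨?_, fun hαG => ?_⟩
  · rintro ⟨T, L, hT, hL, rfl⟩
    exact Subgroup.mem_normalizer_of_closure_conj_image (hgen T hT) (hgen _ hL)
  · have hαH : α ∈ Subgroup.normalizer (H : Set (Equiv.Perm (Fin n))) :=
      hH ▸ Subgroup.mem_normalizer_inf_stabilizer hαG hα0
    obtain ⟨T, hT⟩ := exists_isLeftTransversalIn G H
    exact ⟨T, _, hT, hT.conj_image hαG hαH, rfl⟩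

theorem K_eq_normalizer_of_transversals_generate {n : ℕ} [NeZero n]
    (G : Subgroup (Equiv.Perm (Fin n)))
    (htrans : ∀ i : Fin n, ∃ g ∈ G, g 0 = i)
    (H : Subgroup (Equiv.Perm (Fin n)))
    (hH : H = G ⊓ MulAction.stabilizer (Equiv.Perm (Fin n)) (0 : Fin n))
    (hgen : ∀ T : Set (Equiv.Perm (Fin n)),
      IsLeftTransversalIn G H T → Subgroup.closure T = G) :
    {α : Equiv.Perm (Fin n) | α 0 = 0 ∧
        ∃ T L : Set (Equiv.Perm (Fin n)), IsLeftTransversalIn G H T ∧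
          IsLeftTransversalIn G H L ∧ (fun g => α * g * α⁻¹) '' T = L} =
      {α : Equiv.Perm (Fin n) | α 0 = 0 ∧ α ∈ Subgroup.normalizer (G : Set (Equiv.Perm (Fin n)))} :=
  K_eq_normalizer_of_transversals_generate_general G H hH hgen
end

section
/- Let G be a transitive subgroup of Sym(n) with n ≥ 2, H = Stab_G(1) nontrivial. Then it is not the case that all left transversals of H in G are pairwise isomorphic as left loops; i.e., ict(G,H) ≠ 1. (Key arithmetic step: for a prime p dividing |H|, p^{n-1} does not divide (n-1)!.) -/
theorem Nat.Prime.not_pow_dvd_factorial {p m : ℕ} (hp : p.Prime) (hm : m ≠ 0) :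
    ¬ p ^ m ∣ m.factorial := by
  have := Fact.mk hp
  rw [padicValNat_dvd_iff_le (Nat.factorial_ne_zero m), not_le]
  exact padicValNat_factorial_lt_of_ne_zero p hm

section Sections

variable {β γ : Type*}

noncomputable def sectionsEquivPi (π : β → γ) {B : Set β} {e : β} (he : e ∈ B) :
    {S : Set β // e ∈ S ∧ S ⊆ B ∧ ∀ c, ∃! s, s ∈ S ∧ π s = c} ≃
      ∀ c : {c // c ≠ π e}, {x // x ∈ B ∧ π x = c} where
  toFun S c := ⟨(S.2.2.2 c).choose, S.2.2.1 (S.2.2.2 c).choose_spec.1.1,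
    (S.2.2.2 c).choose_spec.1.2⟩
  invFun F := by
    refine ⟨insert e (Set.range fun c => (F c).1), Set.mem_insert e _, ?_, fun c => ?_⟩
    · rintro s (rfl | ⟨c, rfl⟩)
      exacts [he, (F c).2.1]
    · by_cases hc : c = π e
      · refine ⟨e, ⟨Set.mem_insert e _, hc.symm⟩, ?_⟩
        rintro s ⟨rfl | ⟨d, rfl⟩, rfl⟩
        · rfl
        · exact absurd (F d).2.2.symm (by simpa [hc] using d.2)
      · refine ⟨F ⟨c, hc⟩, ⟨Set.mem_insert_of_mem e ⟨_, rfl⟩, (F _).2.2⟩, ?_⟩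
        rintro s ⟨rfl | ⟨d, rfl⟩, rfl⟩
        · exact absurd rfl hc
        · exact congrArg (fun d => (F d).1) (Subtype.ext (F d).2.2.symm)
  left_inv S := by
    obtain ⟨S, heS, -, hS⟩ := S
    refine Subtype.ext (Set.ext fun s => ⟨?_, fun hs => ?_⟩)
    · rintro (rfl | ⟨c, rfl⟩)
      exacts [heS, (hS c).choose_spec.1.1]
    · by_cases hs' : π s = π e
      · exact Or.inl ((hS (π e)).unique ⟨hs, hs'⟩ ⟨heS, rfl⟩)
      · exact Or.inr ⟨⟨π s, hs'⟩, (hS (π s)).unique (hS (π s)).choose_spec.1 ⟨hs, rfl⟩⟩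
  right_inv F := by
    funext c
    apply Subtype.ext
    dsimp only
    generalize_proofs h
    exact (h.choose_spec.2 _ ⟨Set.mem_insert_of_mem e ⟨c, rfl⟩, (F c).2.2⟩).symm

end Sections

open Equiv MulAction Pointwise

variable {α : Type*} {a : α}

theorem card_stabilizer_perm [Finite α] (a : α) :
    Nat.card (stabilizer (Perm α) a) = (Nat.card α - 1).factorial := by
  have h := (stabilizer (Perm α) a).card_mul_index
  rw [index_stabilizer_of_transitive, Nat.card_perm] at h
  have hpos : 0 < Nat.card α := Nat.card_pos_iff.2 ⟨⟨a⟩, inferInstance⟩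
  rw [← Nat.mul_factorial_pred hpos.ne', mul_comm] at h
  exact Nat.eq_of_mul_eq_mul_left hpos h

theorem inv_mul_mem_stabilizer_iff {s g : Perm α} :
    s⁻¹ * g ∈ stabilizer (Perm α) a ↔ g a = s a := by
  rw [mem_stabilizer_iff, Perm.smul_def, Perm.mul_apply, Perm.inv_eq_iff_eq]

def IsSectionAt (a : α) (S : Set (Perm α)) : Prop :=
  ∀ b, ∃! s, s ∈ S ∧ s a = b

def IsTransversalAt (a : α) (G : Subgroup (Perm α)) (S : Set (Perm α)) : Prop :=
  1 ∈ S ∧ S ⊆ G ∧ IsSectionAt a S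

theorem IsTransversalAt.exists_apply_eq {G : Subgroup (Perm α)} {S : Set (Perm α)}
    (hS : IsTransversalAt a G S) (b : α) : ∃ g ∈ G, g a = b :=
  let ⟨s, hs, hsb⟩ := (hS.2.2 b).exists
  ⟨s, hS.2.1 hs, hsb⟩

theorem isLeftTransversalIn_iff_isTransversalAt {G : Subgroup (Perm α)}
    (hG : ∀ b, ∃ g ∈ G, g a = b) {S : Set (Perm α)} :
    IsLeftTransversalIn G (G ⊓ stabilizer (Perm α) a) S ↔ IsTransversalAt a G S := by
  refine and_congr_right fun _ => and_congr_right fun hSG => ?_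
  have key : ∀ g ∈ G, (∃! s, s ∈ S ∧ s⁻¹ * g ∈ G ⊓ stabilizer (Perm α) a) ↔
      ∃! s, s ∈ S ∧ s a = g a := fun g hg =>
    existsUnique_congr fun s => and_congr_right fun hs => by
      rw [Subgroup.mem_inf, inv_mul_mem_stabilizer_iff, eq_comm]
      exact and_iff_right (mul_mem (inv_mem (hSG hs)) hg)
  refine ⟨fun h b => ?_, fun h g hg => (key g hg).2 (h (g a))⟩
  obtain ⟨g, hg, rfl⟩ := hG b
  exact (key g hg).1 (h g hg)

theorem exists_isTransversalAt {G : Subgroup (Perm α)} (hG : ∀ b, ∃ g ∈ G, g a = b) :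
    ∃ T, IsTransversalAt a G T := by
  choose g hg hga using hG
  exact ⟨_, ((sectionsEquivPi (fun s : Perm α => s a) (one_mem G)).symm
    fun c => ⟨g c, hg c, hga c⟩).2⟩

theorem card_fiber_eq_card_inf_stabilizer {G : Subgroup (Perm α)} {g : Perm α} (hg : g ∈ G) :
    Nat.card {x // x ∈ G ∧ x a = g a} = Nat.card ↥(G ⊓ stabilizer (Perm α) a) := by
  have hfiber : {x | x ∈ G ∧ x a = g a} =
      g • ((G ⊓ stabilizer (Perm α) a : Subgroup (Perm α)) : Set (Perm α)) := by
    ext x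
    rw [Set.mem_smul_set_iff_inv_smul_mem, smul_eq_mul, SetLike.mem_coe, Subgroup.mem_inf,
      inv_mul_mem_stabilizer_iff, Subgroup.mul_mem_cancel_left G (inv_mem hg)]
    rfl
  rw [show Nat.card {x // x ∈ G ∧ x a = g a} = {x | x ∈ G ∧ x a = g a}.ncard from
    Nat.card_coe_set_eq _, hfiber, Set.ncard_smul_set, ← Nat.card_coe_set_eq]
  rfl

theorem card_transversalsAt [Finite α] {G : Subgroup (Perm α)} (hG : ∀ b, ∃ g ∈ G, g a = b) :
    Nat.card {S // IsTransversalAt a G S} =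
      Nat.card ↥(G ⊓ stabilizer (Perm α) a) ^ (Nat.card α - 1) := by
  classical
  have := Fintype.ofFinite α
  have hfiber (c : {c // c ≠ (1 : Perm α) a}) :
      Nat.card {x // x ∈ (G : Set (Perm α)) ∧ x a = c} =
        Nat.card ↥(G ⊓ stabilizer (Perm α) a) := by
    obtain ⟨g, hg, hga⟩ := hG c
    rw [← hga]
    exact card_fiber_eq_card_inf_stabilizer hg
  refine (Nat.card_congr (sectionsEquivPi (fun s : Perm α => s a) (one_mem G))).trans ?_
  rw [Nat.card_pi,
    Finset.prod_congr rfl fun c _ => hfiber c, Finset.prod_const, Finset.card_univ,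
    Fintype.card_subtype_compl, Fintype.card_subtype_eq, Nat.card_eq_fintype_card (α := α)]

/-- The stabilizer of `a`, acting on `Perm α` and on its subsets by conjugation. -/
abbrev conjStabilizer (a : α) : Subgroup (ConjAct (Perm α)) :=
  (stabilizer (Perm α) a).comap ConjAct.ofConjAct.toMonoidHom

theorem mem_conjStabilizer {c : ConjAct (Perm α)} :
    c ∈ conjStabilizer a ↔ ConjAct.ofConjAct c a = a := by
  rw [Subgroup.mem_comap, mem_stabilizer_iff, Perm.smul_def]
  rfl

theorem smul_apply_of_mem_conjStabilizer {c : ConjAct (Perm α)} (hc : c ∈ conjStabilizer a)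
    (s : Perm α) : (c • s) a = ConjAct.ofConjAct c (s a) := by
  rw [ConjAct.smul_def, Perm.mul_apply, Perm.mul_apply,
    Perm.inv_eq_iff_eq.2 (mem_conjStabilizer.1 hc).symm]

theorem IsSectionAt.smul {S : Set (Perm α)} (hS : IsSectionAt a S) {c : ConjAct (Perm α)}
    (hc : c ∈ conjStabilizer a) : IsSectionAt a (c • S) := by
  intro b
  obtain ⟨t, ⟨ht, htb⟩, huniq⟩ := hS ((ConjAct.ofConjAct c)⁻¹ b)
  refine ⟨c • t, ⟨Set.smul_mem_smul_set ht, ?_⟩, ?_⟩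
  · rw [smul_apply_of_mem_conjStabilizer hc, htb]
    exact Equiv.apply_symm_apply _ b
  · rintro _ ⟨⟨s, hs, rfl⟩, hsb⟩
    rw [smul_apply_of_mem_conjStabilizer hc, ← Perm.eq_inv_iff_eq] at hsb
    rw [huniq s ⟨hs, hsb⟩]

theorem IsSectionAt.insert_mul_diff {S : Set (Perm α)} (hS : IsSectionAt a S) {t h : Perm α}
    (ht : t ∈ S) (ha : h a = a) : IsSectionAt a (insert (t * h) (S \ {t})) := by
  have hth : (t * h) a = t a := by rw [Perm.mul_apply, ha]
  intro b
  by_cases hb : b = t a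
  · subst hb
    refine ⟨t * h, ⟨Set.mem_insert _ _, hth⟩, ?_⟩
    rintro s ⟨rfl | ⟨hs, hst⟩, hsa⟩
    · rfl
    · exact absurd ((hS _).unique ⟨hs, hsa⟩ ⟨ht, rfl⟩) hst
  · obtain ⟨s, ⟨hs, hsb⟩, huniq⟩ := hS b
    have hst : s ≠ t := by rintro rfl; exact hb hsb.symm
    refine ⟨s, ⟨Set.mem_insert_of_mem _ ⟨hs, hst⟩, hsb⟩, ?_⟩
    rintro r ⟨rfl | ⟨hr, -⟩, hrb⟩
    · exact absurd (hth.symm.trans hrb) (Ne.symm hb)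
    · exact huniq r ⟨hr, hrb⟩

theorem Subgroup.coe_ne_insert_mul_diff {P : Type*} [Group P] (U V : Subgroup P) {t u h : P}
    (ht : t ∈ U) (hu : u ∈ U) (hu1 : u ≠ 1) (hut : u ≠ t) (hh : h ≠ 1) :
    (V : Set P) ≠ insert (t * h) ((U : Set P) \ {t}) := by
  intro hV
  have hsub : ∀ x ∈ U, x ≠ t → x ∈ V := fun x hx hxt => by
    rw [← SetLike.mem_coe, hV]
    exact Set.mem_insert_of_mem _ ⟨hx, hxt⟩
  have htV : t ∈ V := by
    have hut' : u⁻¹ * t ≠ t := fun h => hu1 (inv_eq_one.1 (mul_eq_right.1 h))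
    simpa using mul_mem (hsub u hu hut) (hsub _ (mul_mem (inv_mem hu) ht) hut')
  rw [← SetLike.mem_coe, hV] at htV
  rcases htV with h' | ⟨-, h'⟩
  · exact hh (mul_eq_left.1 h'.symm)
  · exact h' rfl

theorem IsSectionAt.exists_smul_eq_of_bijOn {T L : Set (Perm α)} (hT : IsSectionAt a T)
    (hL : IsSectionAt a L) (h1 : 1 ∈ T) {σ : Perm α → Perm α} (hσ : Set.BijOn σ T L)
    (hmul : ∀ x ∈ T, ∀ y ∈ T, ∀ z ∈ T, z a = x (y a) → σ z a = σ x (σ y a)) :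
    ∃ c ∈ conjStabilizer a, c • T = L := by
  choose rep hrep using fun b => (hT b).exists
  have rep_apply (t : Perm α) (ht : t ∈ T) : rep (t a) = t := (hT _).unique (hrep _) ⟨ht, rfl⟩
  set φ : α → α := fun b => σ (rep b) a
  have hφ (t : Perm α) (ht : t ∈ T) (b : α) : φ (t b) = σ t (φ b) :=
    hmul t ht _ (hrep b).1 _ (hrep (t b)).1 (by rw [(hrep _).2, (hrep _).2])
  have hφ_inj : Function.Injective φ := fun b b' hbb' => by
    have hσ_eq : σ (rep b) = σ (rep b') :=
      (hL _).unique ⟨hσ.mapsTo (hrep b).1, rfl⟩ ⟨hσ.mapsTo (hrep b').1, hbb'.symm⟩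
    rw [← (hrep b).2, ← (hrep b').2, hσ.injOn (hrep b).1 (hrep b').1 hσ_eq]
  have hφ_surj : Function.Surjective φ := fun c => by
    obtain ⟨l, ⟨hl, rfl⟩, -⟩ := hL c
    obtain ⟨t, ht, rfl⟩ := hσ.surjOn hl
    exact ⟨t a, by simp only [φ, rep_apply t ht]⟩
  set f : Perm α := Equiv.ofBijective φ ⟨hφ_inj, hφ_surj⟩
  have hf (t : Perm α) (ht : t ∈ T) : f * t * f⁻¹ = σ t := by
    rw [mul_inv_eq_iff_eq_mul]
    ext b
    exact hφ t ht b
  have hfa : f a = a := by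
    have hσ1 : σ 1 a = σ 1 (σ 1 a) := hmul 1 h1 1 h1 1 h1 rfl
    have hrep1 : rep a = 1 := rep_apply 1 h1
    exact (show φ a = σ 1 a by simp only [φ, hrep1]).trans ((σ 1).injective hσ1.symm)
  refine ⟨ConjAct.toConjAct f, mem_conjStabilizer.2 hfa, ?_⟩
  rw [← hσ.image_eq, ← Set.image_smul]
  exact Set.image_congr fun t ht => (ConjAct.toConjAct_smul f t).trans (hf t ht)

theorem mem_orbit_of_isLeftIso {G : Subgroup (Perm α)} {T L : Set (Perm α)}
    (hT : IsTransversalAt a G T) (hL : IsTransversalAt a G L) {σ : Perm α → Perm α}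
    (hσ : IsLeftIso (G ⊓ stabilizer (Perm α) a) T L σ) :
    L ∈ orbit (conjStabilizer a) T := by
  have hmul : ∀ x ∈ T, ∀ y ∈ T, ∀ z ∈ T, z a = x (y a) → σ z a = σ x (σ y a) := by
    intro x hx y hy z hz hxyz
    have hH := hσ.2 x hx y hy z hz <| Subgroup.mem_inf.2
      ⟨mul_mem (inv_mem (hT.2.1 hz)) (mul_mem (hT.2.1 hx) (hT.2.1 hy)),
        inv_mul_mem_stabilizer_iff.2 hxyz.symm⟩
    exact (inv_mul_mem_stabilizer_iff.1 (Subgroup.mem_inf.1 hH).2).symm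
  obtain ⟨c, hc, hcT⟩ := hT.2.2.exists_smul_eq_of_bijOn hL.2.2 hT.1 hσ.1 hmul
  exact ⟨⟨c, hc⟩, hcT⟩

theorem orbit_eq_setOf_isTransversalAt [Finite α] {U : Subgroup (Perm α)} {T₀ : Set (Perm α)}
    (hT₀ : IsTransversalAt a U T₀) (hgen : Subgroup.closure T₀ = U)
    (hconj : ∀ L, IsTransversalAt a U L → L ∈ orbit (conjStabilizer a) T₀) :
    orbit ↥(conjStabilizer a ⊓ stabilizer (ConjAct (Perm α)) (U : Set (Perm α))) T₀ =
      {L | IsTransversalAt a U L} := by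
  ext L
  constructor
  · rintro ⟨⟨c, hc, hcU⟩, rfl⟩
    show IsTransversalAt a U (c • T₀)
    refine ⟨?_, ?_, hT₀.2.2.smul hc⟩
    · simpa only [smul_one] using Set.smul_mem_smul_set (a := c) hT₀.1
    · exact (Set.smul_set_mono hT₀.2.1).trans (mem_stabilizer_iff.1 hcU).le
  · intro hL
    obtain ⟨⟨c, hc⟩, rfl⟩ := hconj L hL
    have hle : c • U ≤ U := by
      rw [← hgen, Subgroup.smul_closure, Subgroup.closure_le, hgen]
      exact hL.2.1
    have hcU : c • U = U :=
      Subgroup.eq_of_le_of_card_ge hle (Nat.card_congr (Subgroup.equivSMul c U).toEquiv).le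
    have hcU' : c ∈ stabilizer (ConjAct (Perm α)) (U : Set (Perm α)) := by
      rw [mem_stabilizer_iff, ← Subgroup.coe_pointwise_smul, hcU]
    exact ⟨⟨c, hc, hcU'⟩, rfl⟩

theorem card_inf_stabilizer_pow_dvd_factorial [Finite α] {U : Subgroup (Perm α)}
    {T₀ : Set (Perm α)} (hT₀ : IsTransversalAt a U T₀) (hgen : Subgroup.closure T₀ = U)
    (hconj : ∀ L, IsTransversalAt a U L → L ∈ orbit (conjStabilizer a) T₀) :
    Nat.card ↥(U ⊓ stabilizer (Perm α) a) ^ (Nat.card α - 1) ∣ (Nat.card α - 1).factorial := by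
  set K := conjStabilizer a ⊓ stabilizer (ConjAct (Perm α)) (U : Set (Perm α))
  calc Nat.card ↥(U ⊓ stabilizer (Perm α) a) ^ (Nat.card α - 1)
      = Nat.card {L // IsTransversalAt a U L} := (card_transversalsAt hT₀.exists_apply_eq).symm
    _ = (orbit K T₀).ncard := by
      rw [orbit_eq_setOf_isTransversalAt hT₀ hgen hconj, ← Nat.card_coe_set_eq]
      rfl
    _ = (stabilizer K T₀).index := (index_stabilizer K T₀).symm
    _ ∣ Nat.card K := Subgroup.index_dvd_card _
    _ ∣ Nat.card (conjStabilizer a) := Subgroup.card_dvd_of_le inf_le_left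
    _ ∣ Nat.card (stabilizer (Perm α) a) :=
      Subgroup.card_comap_dvd_of_injective _ _ ConjAct.ofConjAct.injective
    _ = (Nat.card α - 1).factorial := card_stabilizer_perm a

theorem isSectionAt_of_inf_stabilizer_eq_bot {U : Subgroup (Perm α)}
    (hU : ∀ b, ∃ g ∈ U, g a = b) (hbot : U ⊓ stabilizer (Perm α) a = ⊥) :
    IsSectionAt a U := by
  intro b
  obtain ⟨g, hg, rfl⟩ := hU b
  refine ⟨g, ⟨hg, rfl⟩, fun s ⟨hs, hsa⟩ => ?_⟩
  have hgs : g⁻¹ * s ∈ U ⊓ stabilizer (Perm α) a :=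
    Subgroup.mem_inf.2 ⟨mul_mem (inv_mem hg) hs, inv_mul_mem_stabilizer_iff.2 hsa⟩
  rw [hbot, Subgroup.mem_bot, inv_mul_eq_one] at hgs
  exact hgs.symm

theorem exists_isTransversalAt_not_mem_orbit_subgroup {G U : Subgroup (Perm α)}
    (hU : IsTransversalAt a G U) {h : Perm α} (hhG : h ∈ G) (hha : h a = a) {b : α}
    (hb : h b ≠ b) :
    ∃ L, IsTransversalAt a G L ∧ L ∉ orbit (conjStabilizer a) (U : Set (Perm α)) := by
  obtain ⟨t, ⟨htU, htb⟩, -⟩ := hU.2.2 b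
  obtain ⟨u, ⟨huU, hub⟩, -⟩ := hU.2.2 (h b)
  have hba : b ≠ a := by rintro rfl; exact hb hha
  have ht1 : t ≠ 1 := by rintro rfl; exact hba htb.symm
  have hu1 : u ≠ 1 := by rintro rfl; exact hba (h.injective (hub.symm.trans hha.symm))
  have hut : u ≠ t := by rintro rfl; exact hb (hub.symm.trans htb)
  have hh1 : h ≠ 1 := by rintro rfl; exact hb rfl
  refine ⟨insert (t * h) ((U : Set (Perm α)) \ {t}),
    ⟨Set.mem_insert_of_mem _ ⟨one_mem U, ht1.symm⟩, ?_, hU.2.2.insert_mul_diff htU hha⟩, ?_⟩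
  · rintro s (rfl | ⟨hs, -⟩)
    exacts [mul_mem (hU.2.1 htU) hhG, hU.2.1 hs]
  · rintro ⟨c, hc⟩
    exact Subgroup.coe_ne_insert_mul_diff U (c.1 • U) htU huU hu1 hut hh1
      ((Subgroup.coe_pointwise_smul _ _).trans hc)

theorem exists_isTransversalAt_not_mem_orbit [Finite α] {G : Subgroup (Perm α)}
    (hG : ∀ b, ∃ g ∈ G, g a = b) (hH : G ⊓ stabilizer (Perm α) a ≠ ⊥) :
    ∃ T L, IsTransversalAt a G T ∧ IsTransversalAt a G L ∧
      L ∉ orbit (conjStabilizer a) T := by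
  by_contra! hall
  obtain ⟨⟨h, hhG, hha⟩, hh1⟩ := Subgroup.ne_bot_iff_exists_ne_one.1 hH
  obtain ⟨b, hb⟩ : ∃ b, h b ≠ b := not_forall.1 fun h' => hh1 (Subtype.ext (Equiv.ext h'))
  obtain ⟨T₀, hT₀⟩ := exists_isTransversalAt hG
  set U := Subgroup.closure T₀
  have hUG : U ≤ G := (Subgroup.closure_le G).2 hT₀.2.1
  have hT₀U : IsTransversalAt a U T₀ := ⟨hT₀.1, Subgroup.subset_closure, hT₀.2.2⟩
  by_cases hUa : U ⊓ stabilizer (Perm α) a = ⊥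
  · have hUT : IsTransversalAt a G U :=
      ⟨one_mem U, hUG, isSectionAt_of_inf_stabilizer_eq_bot hT₀U.exists_apply_eq hUa⟩
    obtain ⟨L, hL, hUL⟩ := exists_isTransversalAt_not_mem_orbit_subgroup hUT hhG hha hb
    exact hUL (hall _ _ hUT hL)
  · have hn : Nat.card α - 1 ≠ 0 := by
      have := Finite.one_lt_card_iff_nontrivial.2 ⟨⟨h b, b, hb⟩⟩
      omega
    obtain ⟨p, hp, hpH⟩ := Nat.exists_prime_and_dvd fun h1 => hUa (Subgroup.card_eq_one.1 h1)
    exact hp.not_pow_dvd_factorial hn <| (pow_dvd_pow_of_dvd hpH _).trans <|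
      card_inf_stabilizer_pow_dvd_factorial hT₀U rfl
        fun L hL => hall T₀ L hT₀ ⟨hL.1, hL.2.1.trans hUG, hL.2.2⟩

theorem mem_orbit_of_eqvGen_isLeftIso {G : Subgroup (Perm α)} (hG : ∀ b, ∃ g ∈ G, g a = b)
    {X Y : {S // IsLeftTransversalIn G (G ⊓ stabilizer (Perm α) a) S}}
    (hXY : Relation.EqvGen (fun X Y => ∃ σ, IsLeftIso (G ⊓ stabilizer (Perm α) a) X.1 Y.1 σ)
      X Y) :
    Y.1 ∈ orbit (conjStabilizer a) X.1 := by
  induction hXY with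
  | rel X Y hXY =>
    obtain ⟨σ, hσ⟩ := hXY
    exact mem_orbit_of_isLeftIso ((isLeftTransversalIn_iff_isTransversalAt hG).1 X.2)
      ((isLeftTransversalIn_iff_isTransversalAt hG).1 Y.2) hσ
  | refl X => exact mem_orbit_self _
  | symm X Y _ ih => exact mem_orbit_symm.1 ih
  | trans X Y Z _ _ ih₁ ih₂ => rwa [← orbit_eq_iff.2 ih₁]

theorem ict_ne_one_general {n : ℕ} [NeZero n]
    (G : Subgroup (Equiv.Perm (Fin n)))
    (htrans : ∀ i : Fin n, ∃ g ∈ G, g 0 = i)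
    (H : Subgroup (Equiv.Perm (Fin n)))
    (hH : H = G ⊓ MulAction.stabilizer (Equiv.Perm (Fin n)) (0 : Fin n))
    (hHne : H ≠ ⊥) :
    Nat.card (Quot fun (T L : {S : Set (Equiv.Perm (Fin n)) //
        IsLeftTransversalIn G H S}) =>
      ∃ σ : Equiv.Perm (Fin n) → Equiv.Perm (Fin n), IsLeftIso H T.1 L.1 σ) ≠ 1 := by
  subst hH
  intro hcard
  have := (Nat.card_eq_one_iff_unique.1 hcard).1
  obtain ⟨T, L, hT, hL, hTL⟩ := exists_isTransversalAt_not_mem_orbit htrans hHne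
  rw [← isLeftTransversalIn_iff_isTransversalAt htrans] at hT hL
  exact hTL (mem_orbit_of_eqvGen_isLeftIso htrans (X := ⟨T, hT⟩) (Y := ⟨L, hL⟩)
    (Quot.eq.1 (Subsingleton.elim _ _)))

theorem ict_ne_one {n : ℕ} [NeZero n] (hn : 2 ≤ n)
    (G : Subgroup (Equiv.Perm (Fin n)))
    (htrans : ∀ i : Fin n, ∃ g ∈ G, g 0 = i)
    (H : Subgroup (Equiv.Perm (Fin n)))
    (hH : H = G ⊓ MulAction.stabilizer (Equiv.Perm (Fin n)) (0 : Fin n))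
    (hHne : H ≠ ⊥) :
    Nat.card (Quot fun (T L : {S : Set (Equiv.Perm (Fin n)) //
        IsLeftTransversalIn G H S}) =>
      ∃ σ : Equiv.Perm (Fin n) → Equiv.Perm (Fin n), IsLeftIso H T.1 L.1 σ) ≠ 1 :=
  ict_ne_one_general G htrans H hH hHne
end
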